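/- arXiv:2502.12738 — 2 statements merged into one kernel-verified Lean document; each statement's English description precedes it below -/
import Mathlib

section
/- The average sufficient statistic t̄ lies on the relative boundary relbd(C) of the polytope C if and only if the empirical KLIEP loss ℓ is bounded from below but does not attain a global minimum (i.e., there is M ∈ ℝ with ℓ(Δ) ≥ M for all Δ, yet no Δ₀ satisfies ℓ(Δ₀) ≤ ℓ(Δ) for all Δ). (Theorem 1(ii).) -/
open scoped RealInnerProductSpace

/-- The empirical KLIEP loss
`ℓ(Δ) = -⟪Δ, t̄⟫ + log((1/n) ∑_j exp ⟪Δ, t_j⟫)`. -/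
noncomputable def kliepLoss {k n : ℕ} (tbar : EuclideanSpace ℝ (Fin k))
    (t : Fin n → EuclideanSpace ℝ (Fin k)) (Δ : EuclideanSpace ℝ (Fin k)) : ℝ :=
  -⟪Δ, tbar⟫ + Real.log ((1 / (n : ℝ)) * ∑ j, Real.exp ⟪Δ, t j⟫)

open Set Filter Topology

/-!
Put `s j = t j - t̄`, so that `ℓ Δ = log ((1/n) ∑ exp ⟪Δ, s j⟫)` lies between
`max_j ⟪Δ, s j⟫ - log n` and `max_j ⟪Δ, s j⟫`. Hence `ℓ` is bounded below iff no `Δ` makes every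
`⟪Δ, s j⟫` negative, i.e. iff `t̄ ∈ C`. A direction `v` with all `⟪v, s j⟫ ≤ 0` and one of them
negative strictly decreases `ℓ` along `Δ ↦ Δ + v`; without such a direction `ℓ` grows linearly on
the span `W` of the `s j` and only depends on the projection to `W`, so it attains its minimum.
Finally, for `t̄ ∈ C` the absence of such a direction means `t̄ ∈ relint C`: inside `W` the
translate `C - t̄` has nonempty interior, and a functional separating `0` from that interior would
be such a direction.
-/

theorem Submodule.span_range_mk_eq_top {R M ι : Type*} [Semiring R] [AddCommMonoid M]
    [Module R M] (f : ι → M) :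
    span R (range fun i => (⟨f i, subset_span (mem_range_self i)⟩ : span R (range f))) = ⊤ := by
  convert span_span_coe_preimage (R := R) (s := range f)
  ext w
  constructor
  · rintro ⟨i, rfl⟩
    exact mem_range_self i
  · rintro ⟨i, hi⟩
    exact ⟨i, Subtype.ext hi⟩

section NormedSpace

variable {E : Type*} [NormedAddCommGroup E] [NormedSpace ℝ E]

theorem eventually_lineMap_mem_of_mem_intrinsicInterior {s : Set E} {x y : E}
    (hx : x ∈ intrinsicInterior ℝ s) (hy : y ∈ affineSpan ℝ s) :
    ∀ᶠ ε in 𝓝 (0 : ℝ), AffineMap.lineMap x y ε ∈ s := by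
  obtain ⟨p, hp, rfl⟩ := hx
  let γ : ℝ → affineSpan ℝ s := fun ε =>
    ⟨AffineMap.lineMap (p : E) y ε, AffineMap.lineMap_mem ε p.2 hy⟩
  have hγ : Continuous γ := AffineMap.lineMap_continuous.subtype_mk _
  have hγ0 : γ 0 = p := Subtype.ext (AffineMap.lineMap_apply_zero _ _)
  have : γ ⁻¹' interior ((↑) ⁻¹' s) ∈ 𝓝 0 :=
    hγ.continuousAt.preimage_mem_nhds (hγ0 ▸ isOpen_interior.mem_nhds hp)
  exact mem_of_superset this fun ε hε =>
    interior_subset (s := ((↑) : affineSpan ℝ s → E) ⁻¹' s) hε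

theorem zero_mem_interior_convexHull_of_span_eq_top [FiniteDimensional ℝ E] {ι : Type*}
    {s : ι → E} (hspan : Submodule.span ℝ (range s) = ⊤) (h0 : (0 : E) ∈ convexHull ℝ (range s))
    (hs : ∀ f : StrongDual ℝ E, (∀ i, f (s i) ≤ 0) → ∀ i, f (s i) = 0) :
    (0 : E) ∈ interior (convexHull ℝ (range s)) := by
  have haff : affineSpan ℝ (convexHull ℝ (range s)) = ⊤ := by
    rw [AffineSubspace.affineSpan_eq_top_iff_vectorSpan_eq_top_of_nonempty ℝ E E ⟨0, h0⟩,
      vectorSpan_eq_span_vsub_set_right ℝ h0]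
    simpa using eq_top_mono (Submodule.span_mono (subset_convexHull ℝ _)) hspan
  by_contra hnot
  obtain ⟨f, u, hf, hfs, hu⟩ := geometric_hahn_banach_of_nonempty_interior
    (convex_convexHull ℝ _) (convex_singleton 0) (disjoint_singleton_right.2 hnot)
    ((convex_convexHull ℝ _).interior_nonempty_iff_affineSpan_eq_top.2 haff)
    (singleton_nonempty 0)
  have hle : ∀ i, f (s i) ≤ 0 := fun i =>
    (hfs _ (subset_convexHull ℝ _ (mem_range_self i))).trans (by simpa using hu 0 rfl)
  exact hf (ContinuousLinearMap.coe_injective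
    (LinearMap.ext_on_range hspan (by simpa using hs f hle)))

theorem exists_pos_forall_exists_mul_norm_le [FiniteDimensional ℝ E] {ι : Type*} [Fintype ι]
    [Nonempty ι] (f : ι → StrongDual ℝ E) (hf : ∀ w ≠ 0, ∃ i, 0 < f i w) :
    ∃ c > 0, ∀ w, ∃ i, c * ‖w‖ ≤ f i w := by
  let F : E → ℝ := fun w => Finset.univ.sup' Finset.univ_nonempty fun i => f i w
  have hF : Continuous F := Continuous.finset_sup'_apply _ fun i _ => (f i).continuous
  have hFpos : ∀ w ∈ Metric.sphere (0 : E) 1, 0 < F w := fun w hw => by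
    obtain ⟨i, hi⟩ := hf w (Metric.ne_of_mem_sphere hw one_ne_zero)
    exact (Finset.lt_sup'_iff _).2 ⟨i, Finset.mem_univ _, hi⟩
  obtain ⟨c, hc, hcF⟩ := (isCompact_sphere (0 : E) 1).exists_forall_le' hF.continuousOn hFpos
  refine ⟨c, hc, fun w => ?_⟩
  rcases eq_or_ne w 0 with rfl | hw
  · exact ⟨Classical.arbitrary ι, by simp⟩
  have hw' := norm_pos_iff.2 hw
  obtain ⟨i, -, hi⟩ :=
    (Finset.le_sup'_iff _).1 (hcF (‖w‖⁻¹ • w) (by simp [norm_smul, hw'.ne']))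
  rw [map_smul, smul_eq_mul, le_inv_mul_iff₀ hw', mul_comm] at hi
  exact ⟨i, hi⟩

end NormedSpace

section InnerProduct

variable {E : Type*} [NormedAddCommGroup E] [InnerProductSpace ℝ E] {ι : Type*} {t : ι → E}
  {x : E}

theorem exists_inner_le_inner_of_mem_convexHull (hx : x ∈ convexHull ℝ (range t)) (v : E) :
    ∃ i, ⟪v, x⟫ ≤ ⟪v, t i⟫ := by
  obtain ⟨_, ⟨i, rfl⟩, hi⟩ :=
    ((innerₗ E v).convexOn convex_univ).exists_ge_of_mem_convexHull (subset_univ _) hx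
  exact ⟨i, hi⟩

theorem inner_sub_eq_zero_of_mem_intrinsicInterior_convexHull {v : E}
    (hx : x ∈ intrinsicInterior ℝ (convexHull ℝ (range t))) (hv : ∀ i, ⟪v, t i - x⟫ ≤ 0)
    (i : ι) : ⟪v, t i - x⟫ = 0 := by
  obtain ⟨ε, hε, hmem⟩ := (eventually_lineMap_mem_of_mem_intrinsicInterior hx
    (subset_affineSpan ℝ _ (subset_convexHull ℝ _ (mem_range_self i)))).exists_lt
  obtain ⟨j, hj⟩ := exists_inner_le_inner_of_mem_convexHull hmem v
  have hεi : ε * ⟪v, t i - x⟫ ≤ 0 := by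
    rw [← real_inner_smul_right, ← vsub_eq_sub, ← AffineMap.lineMap_vsub_left, vsub_eq_sub]
    linarith [hv j, inner_sub_right (𝕜 := ℝ) v (AffineMap.lineMap x (t i) ε) x,
      inner_sub_right (𝕜 := ℝ) v (t j) x]
  exact le_antisymm (hv i) (nonneg_of_mul_nonpos_right hεi hε)

theorem mem_intrinsicInterior_convexHull_of_forall_inner_sub_eq_zero [FiniteDimensional ℝ E]
    (hx : x ∈ convexHull ℝ (range t))
    (ht : ∀ v, (∀ i, ⟪v, t i - x⟫ ≤ 0) → ∀ i, ⟪v, t i - x⟫ = 0) :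
    x ∈ intrinsicInterior ℝ (convexHull ℝ (range t)) := by
  set W := Submodule.span ℝ (range fun i => t i - x)
  let s : ι → W := fun i => ⟨t i - x, Submodule.subset_span (mem_range_self i)⟩
  let φ : W →ᵃⁱ[ℝ] E :=
    (AffineIsometryEquiv.vaddConst ℝ x).toAffineIsometry.comp W.subtypeₗᵢ.toAffineIsometry
  have hφ : ∀ w, φ w = (w : E) + x := fun w => rfl
  have himage : φ '' convexHull ℝ (range s) = convexHull ℝ (range t) := by
    rw [← φ.coe_toAffineMap, φ.toAffineMap.image_convexHull, ← range_comp]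
    congr
    ext i
    simp [hφ, s]
  have h0 : (0 : W) ∈ convexHull ℝ (range s) := by
    rw [← himage] at hx
    obtain ⟨w, hw, hwx⟩ := hx
    obtain rfl : w = 0 := by simpa [hφ] using hwx
    exact hw
  have hs : ∀ f : StrongDual ℝ W, (∀ i, f (s i) ≤ 0) → ∀ i, f (s i) = 0 := by
    intro f hf
    have key : ∀ i, ⟪((InnerProductSpace.toDual ℝ W).symm f : E), t i - x⟫ = f (s i) :=
      fun i => (W.coe_inner _ (s i)).symm.trans InnerProductSpace.toDual_symm_apply
    simpa only [key] using ht _ fun i => (key i).trans_le (hf i)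
  rw [← himage, φ.intrinsicInterior_image]
  exact ⟨0, interior_subset_intrinsicInterior (zero_mem_interior_convexHull_of_span_eq_top
    (Submodule.span_range_mk_eq_top _) h0 hs), by simp [hφ]⟩

theorem mem_intrinsicInterior_convexHull_iff [FiniteDimensional ℝ E]
    (hx : x ∈ convexHull ℝ (range t)) :
    x ∈ intrinsicInterior ℝ (convexHull ℝ (range t)) ↔
      ∀ v, (∀ i, ⟪v, t i - x⟫ ≤ 0) → ∀ i, ⟪v, t i - x⟫ = 0 :=
  ⟨fun h _ hv => inner_sub_eq_zero_of_mem_intrinsicInterior_convexHull h hv,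
    mem_intrinsicInterior_convexHull_of_forall_inner_sub_eq_zero hx⟩

end InnerProduct

section Loss

open Real

variable {k n : ℕ} {tbar : EuclideanSpace ℝ (Fin k)} {t : Fin n → EuclideanSpace ℝ (Fin k)}

theorem kliepLoss_eq_log_mean_exp [NeZero n] (Δ : EuclideanSpace ℝ (Fin k)) :
    kliepLoss tbar t Δ = log ((1 / n) * ∑ j, exp ⟪Δ, t j - tbar⟫) := by
  have := NeZero.pos n
  simp_rw [kliepLoss, inner_sub_right, exp_sub, ← Finset.sum_div, ← mul_div_assoc]
  rw [log_div (by positivity) (exp_pos _).ne', log_exp]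
  ring

theorem sub_log_le_kliepLoss (Δ : EuclideanSpace ℝ (Fin k)) (j : Fin n) :
    ⟪Δ, t j - tbar⟫ - log n ≤ kliepLoss tbar t Δ := by
  have : NeZero n := ⟨j.pos.ne'⟩
  have := j.pos
  rw [kliepLoss_eq_log_mean_exp]
  calc ⟪Δ, t j - tbar⟫ - log n = log ((1 / n) * exp ⟪Δ, t j - tbar⟫) := by
        rw [log_mul (by positivity) (exp_pos _).ne', log_exp, one_div, log_inv]
        ring
    _ ≤ _ := by
        gcongr
        exact Finset.single_le_sum (f := fun i => exp ⟪Δ, t i - tbar⟫) (fun i _ => (exp_pos _).le)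
          (Finset.mem_univ j)

theorem neg_log_le_kliepLoss (h : tbar ∈ convexHull ℝ (range t)) (Δ : EuclideanSpace ℝ (Fin k)) :
    -log n ≤ kliepLoss tbar t Δ := by
  obtain ⟨j, hj⟩ := exists_inner_le_inner_of_mem_convexHull h Δ
  linarith [sub_log_le_kliepLoss (tbar := tbar) (t := t) Δ j,
    inner_sub_right (𝕜 := ℝ) Δ (t j) tbar]

variable [NeZero n]

theorem kliepLoss_le_of_forall_inner_sub_le {Δ : EuclideanSpace ℝ (Fin k)} {c : ℝ}
    (h : ∀ j, ⟪Δ, t j - tbar⟫ ≤ c) : kliepLoss tbar t Δ ≤ c := by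
  have := NeZero.pos n
  rw [kliepLoss_eq_log_mean_exp]
  calc _ ≤ log ((1 / n) * ∑ _j : Fin n, exp c) := by gcongr with j; exact h j
    _ = c := by simp [NeZero.ne]

theorem kliepLoss_add_lt {Δ v : EuclideanSpace ℝ (Fin k)} (hv : ∀ j, ⟪v, t j - tbar⟫ ≤ 0)
    {j₀ : Fin n} (hj₀ : ⟪v, t j₀ - tbar⟫ < 0) : kliepLoss tbar t (Δ + v) < kliepLoss tbar t Δ := by
  have := NeZero.pos n
  simp_rw [kliepLoss_eq_log_mean_exp, inner_add_left]
  refine log_lt_log (by positivity) (mul_lt_mul_of_pos_left (Finset.sum_lt_sum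
    (fun j _ => exp_le_exp.2 ?_) ⟨j₀, Finset.mem_univ _, exp_lt_exp.2 ?_⟩) (by positivity))
  · linarith [hv j]
  · linarith

theorem continuous_kliepLoss : Continuous (kliepLoss tbar t) := by
  have := NeZero.pos n
  rw [funext kliepLoss_eq_log_mean_exp]
  exact Continuous.log (by fun_prop) fun Δ => by positivity

theorem exists_kliepLoss_lt_of_notMem_convexHull (h : tbar ∉ convexHull ℝ (range t)) (M : ℝ) :
    ∃ Δ, kliepLoss tbar t Δ < M := by
  obtain ⟨f, u, hfC, hu⟩ := geometric_hahn_banach_closed_point (convex_convexHull ℝ _)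
    ((finite_range t).isCompact_convexHull ℝ).isClosed h
  set v := (InnerProductSpace.toDual ℝ _).symm f
  have hv : ∀ z, ⟪v, z⟫ = f z := fun z => InnerProductSpace.toDual_symm_apply
  have hδ : 0 < f tbar - u := sub_pos.2 hu
  set r := (|M| + 1) / (f tbar - u)
  have hΔ : kliepLoss tbar t (r • v) ≤ -(|M| + 1) := by
    refine kliepLoss_le_of_forall_inner_sub_le fun j => ?_
    have := hfC _ (subset_convexHull ℝ _ (mem_range_self j))
    calc ⟪r • v, t j - tbar⟫ = r * (f (t j) - f tbar) := by
          rw [real_inner_smul_left, inner_sub_right, hv, hv]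
      _ ≤ r * -(f tbar - u) := by gcongr; linarith
      _ = -(|M| + 1) := by simp only [r]; field_simp
  exact ⟨r • v, by linarith [neg_abs_le M]⟩

theorem bddBelow_range_kliepLoss_iff :
    BddBelow (range (kliepLoss tbar t)) ↔ tbar ∈ convexHull ℝ (range t) := by
  refine ⟨fun ⟨M, hM⟩ => ?_, fun h => ⟨-log n, forall_mem_range.2 (neg_log_le_kliepLoss h)⟩⟩
  by_contra h
  obtain ⟨Δ, hΔ⟩ := exists_kliepLoss_lt_of_notMem_convexHull h M
  exact hΔ.not_ge (hM (mem_range_self Δ))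

end Loss

section Minimizer

variable {k n : ℕ} [NeZero n] {tbar : EuclideanSpace ℝ (Fin k)}
  {t : Fin n → EuclideanSpace ℝ (Fin k)}

theorem exists_forall_kliepLoss_le_of_forall_inner_sub_eq_zero
    (h : ∀ v, (∀ j, ⟪v, t j - tbar⟫ ≤ 0) → ∀ j, ⟪v, t j - tbar⟫ = 0) :
    ∃ Δ₀, ∀ Δ, kliepLoss tbar t Δ₀ ≤ kliepLoss tbar t Δ := by
  set W := Submodule.span ℝ (range fun j => t j - tbar)
  let s : Fin n → W := fun j => ⟨t j - tbar, Submodule.subset_span (mem_range_self j)⟩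
  have hs : ∀ (w : W) j, innerSL ℝ (s j) w = ⟪(w : EuclideanSpace ℝ (Fin k)), t j - tbar⟫ :=
    fun w j => by rw [innerSL_apply_apply, W.coe_inner, real_inner_comm]
  have hpos : ∀ w : W, w ≠ 0 → ∃ j, 0 < ⟪(w : EuclideanSpace ℝ (Fin k)), t j - tbar⟫ := by
    intro w hw
    by_contra! hle
    have hw0 : (innerSL ℝ w : W →ₗ[ℝ] ℝ) = 0 :=
      LinearMap.ext_on_range (Submodule.span_range_mk_eq_top _) fun j => by
        simpa [W.coe_inner] using h w hle j
    exact hw (by simpa using congr($hw0 w))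
  obtain ⟨c, hc, hcs⟩ := exists_pos_forall_exists_mul_norm_le (fun j => innerSL ℝ (s j))
    fun w hw => by simpa only [hs] using hpos w hw
  have hgrowth : ∀ w : W, c * ‖w‖ + -Real.log n ≤ kliepLoss tbar t w := fun w => by
    obtain ⟨j, hj⟩ := hcs w
    linarith [sub_log_le_kliepLoss (tbar := tbar) (t := t) w j, hs w j]
  obtain ⟨w₀, hw₀⟩ := (continuous_kliepLoss.comp continuous_subtype_val).exists_forall_le
    (tendsto_atTop_mono hgrowth (tendsto_atTop_add_const_right _ _
      (tendsto_norm_cocompact_atTop.const_mul_atTop hc)))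
  -- `ℓ` sees `Δ` only through the `⟪Δ, t j - t̄⟫`, which projecting onto `W` does not change.
  refine ⟨w₀, fun Δ => (hw₀ (W.orthogonalProjectionOnto Δ)).trans_eq ?_⟩
  simp only [Function.comp_apply, kliepLoss_eq_log_mean_exp]
  congr 3 with j
  rw [Submodule.coe_orthogonalProjectionOnto_apply, Submodule.inner_starProjection_left_eq_right,
    Submodule.starProjection_eq_self_iff.2 (Submodule.subset_span (mem_range_self j))]

theorem exists_forall_kliepLoss_le_iff :
    (∃ Δ₀, ∀ Δ, kliepLoss tbar t Δ₀ ≤ kliepLoss tbar t Δ) ↔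
      ∀ v, (∀ j, ⟪v, t j - tbar⟫ ≤ 0) → ∀ j, ⟪v, t j - tbar⟫ = 0 := by
  refine ⟨fun ⟨Δ₀, hΔ₀⟩ v hv j => ?_, exists_forall_kliepLoss_le_of_forall_inner_sub_eq_zero⟩
  by_contra hj
  exact (kliepLoss_add_lt hv ((hv j).lt_of_ne hj)).not_ge (hΔ₀ (Δ₀ + v))

end Minimizer

theorem kliep_bddBelow_not_attained_iff_relbd_general {k n : ℕ} (hn : 1 ≤ n)
    (tbar : EuclideanSpace ℝ (Fin k)) (t : Fin n → EuclideanSpace ℝ (Fin k)) :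
    tbar ∈ convexHull ℝ (Set.range t) \ intrinsicInterior ℝ (convexHull ℝ (Set.range t)) ↔
      ((∃ M : ℝ, ∀ Δ : EuclideanSpace ℝ (Fin k), M ≤ kliepLoss tbar t Δ) ∧
        ¬ ∃ Δ₀ : EuclideanSpace ℝ (Fin k), ∀ Δ : EuclideanSpace ℝ (Fin k),
            kliepLoss tbar t Δ₀ ≤ kliepLoss tbar t Δ) := by
  have : NeZero n := ⟨by omega⟩
  have hbdd : (∃ M, ∀ Δ, M ≤ kliepLoss tbar t Δ) ↔ tbar ∈ convexHull ℝ (range t) := by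
    simpa [BddBelow, Set.Nonempty, lowerBounds] using bddBelow_range_kliepLoss_iff
  rw [hbdd, exists_forall_kliepLoss_le_iff, Set.mem_sdiff]
  exact and_congr_right fun hC => not_congr (mem_intrinsicInterior_convexHull_iff hC)

/-- Theorem 1(ii): `t̄ ∈ relbd(C)` (i.e. `t̄ ∈ C \ relint(C)`) iff the empirical KLIEP loss
is bounded from below but does not attain a global minimum. -/
theorem kliep_bddBelow_not_attained_iff_relbd {k n : ℕ} (hk : 1 ≤ k) (hn : 1 ≤ n)
    (tbar : EuclideanSpace ℝ (Fin k)) (t : Fin n → EuclideanSpace ℝ (Fin k)) :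
    tbar ∈ convexHull ℝ (Set.range t) \ intrinsicInterior ℝ (convexHull ℝ (Set.range t)) ↔
      ((∃ M : ℝ, ∀ Δ : EuclideanSpace ℝ (Fin k), M ≤ kliepLoss tbar t Δ) ∧
        ¬ ∃ Δ₀ : EuclideanSpace ℝ (Fin k), ∀ Δ : EuclideanSpace ℝ (Fin k),
            kliepLoss tbar t Δ₀ ≤ kliepLoss tbar t Δ) :=
  kliep_bddBelow_not_attained_iff_relbd_general hn tbar t
end

section
/- If t̄ ∉ C and λ > λ#, then the norm-penalized KLIEP loss ℓ_λ(Δ) = ℓ(Δ) + λ·N(Δ) attains a global minimum, i.e., there exists Δ₀ ∈ ℝ^k with ℓ_λ(Δ₀) ≤ ℓ_λ(Δ) for all Δ ∈ ℝ^k. (Theorem 2(iii)(a).) -/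
/-
The penalty dominates the loss at infinity. For any `s ∈ C` the log-mean-exp term is at least
`max_j ⟪Δ, t_j⟫ - log n ≥ ⟪Δ, s⟫ - log n`, and `⟪Δ, t̄ - s⟫ ≤ N(Δ) N#(t̄ - s)`. Taking `s` with
`N#(t̄ - s) = λ#` gives `ℓ(Δ) + λ N(Δ) ≥ (λ - λ#) N(Δ) - log n`, and `N` is bounded below by a
positive multiple of the Euclidean norm. So the continuous penalized loss tends to `+∞` at
infinity and attains its minimum.
-/

open scoped RealInnerProductSpace

/-- The dual norm `N#(v) = sup { ⟪Δ, v⟫ : N(Δ) ≤ 1 }` of a norm `N` on `ℝ^k`. -/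
noncomputable def dualNorm {k : ℕ} (N : EuclideanSpace ℝ (Fin k) → ℝ)
    (v : EuclideanSpace ℝ (Fin k)) : ℝ :=
  sSup ((fun Δ : EuclideanSpace ℝ (Fin k) => ⟪Δ, v⟫) '' {Δ | N Δ ≤ 1})

open Filter

section Seminorm

variable {E : Type*} [NormedAddCommGroup E] [NormedSpace ℝ E] [FiniteDimensional ℝ E]

theorem Seminorm.continuous_of_finiteDimensional (p : Seminorm ℝ E) : Continuous p :=
  p.convexOn.locallyLipschitz.continuous

theorem Seminorm.exists_pos_mul_norm_le (p : Seminorm ℝ E) (hp : ∀ x, p x = 0 → x = 0) :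
    ∃ m > 0, ∀ x, m * ‖x‖ ≤ p x := by
  rcases subsingleton_or_nontrivial E with _ | _
  · exact ⟨1, one_pos, fun x => by simp [Subsingleton.elim x 0]⟩
  obtain ⟨z, hz, hz_min⟩ := (isCompact_sphere (0 : E) 1).exists_isMinOn
    (NormedSpace.sphere_nonempty.2 zero_le_one) p.continuous_of_finiteDimensional.continuousOn
  have hz0 : z ≠ 0 := by rintro rfl; simp at hz
  refine ⟨p z, (apply_nonneg p z).lt_of_ne' (mt (hp z) hz0), fun x => ?_⟩
  rcases eq_or_ne x 0 with rfl | hx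
  · simp
  have hx_unit : ‖x‖⁻¹ • x ∈ Metric.sphere (0 : E) 1 := by simp [norm_smul, hx]
  calc p z * ‖x‖ ≤ p (‖x‖⁻¹ • x) * ‖x‖ := by gcongr; exact hz_min hx_unit
    _ = p x := by
      rw [map_smul_eq_mul, norm_inv, norm_norm]
      field_simp

theorem Seminorm.tendsto_cocompact_atTop (p : Seminorm ℝ E) (hp : ∀ x, p x = 0 → x = 0) :
    Tendsto p (cocompact E) atTop := by
  obtain ⟨m, hm, hmp⟩ := p.exists_pos_mul_norm_le hp
  exact tendsto_atTop_mono hmp (tendsto_norm_cocompact_atTop.const_mul_atTop hm)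

end Seminorm

section DualNorm

variable {k : ℕ} (p : Seminorm ℝ (EuclideanSpace ℝ (Fin k)))

theorem bddAbove_inner_image_seminorm_le_one (hp : ∀ x, p x = 0 → x = 0)
    (v : EuclideanSpace ℝ (Fin k)) : BddAbove ((fun Δ => ⟪Δ, v⟫) '' {Δ | p Δ ≤ 1}) := by
  obtain ⟨m, hm, hmp⟩ := p.exists_pos_mul_norm_le hp
  refine ⟨‖v‖ / m, ?_⟩
  rintro _ ⟨Δ, hΔ, rfl⟩
  have hΔm : ‖Δ‖ ≤ 1 / m := by rw [le_div_iff₀ hm]; linarith [hmp Δ, hΔ.out]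
  calc ⟪Δ, v⟫ ≤ ‖Δ‖ * ‖v‖ := real_inner_le_norm Δ v
    _ ≤ 1 / m * ‖v‖ := by gcongr
    _ = ‖v‖ / m := by ring

theorem inner_le_mul_dualNorm (hp : ∀ x, p x = 0 → x = 0) (Δ v : EuclideanSpace ℝ (Fin k)) :
    ⟪Δ, v⟫ ≤ p Δ * dualNorm p v := by
  rcases eq_or_ne Δ 0 with rfl | hΔ
  · simp
  have hpΔ : 0 < p Δ := (apply_nonneg p Δ).lt_of_ne' (mt (hp Δ) hΔ)
  have hunit : p ((p Δ)⁻¹ • Δ) ≤ 1 := by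
    rw [map_smul_eq_mul, norm_inv, Real.norm_of_nonneg hpΔ.le, inv_mul_cancel₀ hpΔ.ne']
  have hle : ⟪(p Δ)⁻¹ • Δ, v⟫ ≤ dualNorm p v :=
    le_csSup (bddAbove_inner_image_seminorm_le_one p hp v) ⟨_, hunit, rfl⟩
  rw [real_inner_smul_left] at hle
  calc ⟪Δ, v⟫ = p Δ * ((p Δ)⁻¹ * ⟪Δ, v⟫) := by field_simp
    _ ≤ p Δ * dualNorm p v := by gcongr

end DualNorm

theorem sub_log_le_log_mean_exp {n : ℕ} (a : Fin n → ℝ) (j : Fin n) :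
    a j - Real.log n ≤ Real.log ((1 / (n : ℝ)) * ∑ i, Real.exp (a i)) := by
  have hn : (0 : ℝ) < n := by exact_mod_cast j.pos
  calc a j - Real.log n = Real.log ((1 / n) * Real.exp (a j)) := by
        rw [Real.log_mul (by positivity) (Real.exp_ne_zero _), Real.log_exp, one_div,
          Real.log_inv]
        ring
    _ ≤ _ := by
      gcongr
      exact Finset.single_le_sum (fun i _ => (Real.exp_pos (a i)).le) (Finset.mem_univ j)

theorem exists_inner_le_inner_of_mem_convexHull_s11 {E ι : Type*} [NormedAddCommGroup E]
    [InnerProductSpace ℝ E] {t : ι → E} {s : E} (Δ : E) (hs : s ∈ convexHull ℝ (Set.range t)) :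
    ∃ j, ⟪Δ, s⟫ ≤ ⟪Δ, t j⟫ := by
  obtain ⟨_, ⟨j, rfl⟩, hj⟩ :=
    ((innerₛₗ ℝ Δ).convexOn convex_univ).exists_ge_of_mem_convexHull (Set.subset_univ _) hs
  exact ⟨j, hj⟩

theorem continuous_kliepLoss_s11 {k n : ℕ} [Nonempty (Fin n)] (tbar : EuclideanSpace ℝ (Fin k))
    (t : Fin n → EuclideanSpace ℝ (Fin k)) : Continuous (kliepLoss tbar t) := by
  refine (continuous_id.inner continuous_const).neg.add (Continuous.log (by fun_prop) fun Δ => ?_)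
  have hn : (0 : ℝ) < n := by exact_mod_cast Fin.pos_iff_nonempty.2 ‹_›
  have : 0 < ∑ j, Real.exp ⟪Δ, t j⟫ :=
    Finset.sum_pos (fun j _ => Real.exp_pos _) Finset.univ_nonempty
  positivity

section Kliep

variable {k n : ℕ} {tbar s : EuclideanSpace ℝ (Fin k)} {t : Fin n → EuclideanSpace ℝ (Fin k)}

theorem inner_sub_log_le_kliepLoss (hs : s ∈ convexHull ℝ (Set.range t))
    (Δ : EuclideanSpace ℝ (Fin k)) : ⟪Δ, s - tbar⟫ - Real.log n ≤ kliepLoss tbar t Δ := by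
  obtain ⟨j, hj⟩ := exists_inner_le_inner_of_mem_convexHull_s11 Δ hs
  have := sub_log_le_log_mean_exp (fun i => ⟪Δ, t i⟫) j
  rw [kliepLoss, inner_sub_right]
  linarith

theorem sub_log_le_kliepLoss_add_mul (p : Seminorm ℝ (EuclideanSpace ℝ (Fin k)))
    (hp : ∀ x, p x = 0 → x = 0) (hs : s ∈ convexHull ℝ (Set.range t)) (lam : ℝ)
    (Δ : EuclideanSpace ℝ (Fin k)) :
    (lam - dualNorm p (tbar - s)) * p Δ - Real.log n ≤ kliepLoss tbar t Δ + lam * p Δ := by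
  have hloss := inner_sub_log_le_kliepLoss (tbar := tbar) hs Δ
  have hdual := inner_le_mul_dualNorm p hp Δ (tbar - s)
  rw [inner_sub_right] at hloss hdual
  linarith

end Kliep

theorem penalized_kliep_attains_min_of_gt_dual_dist_general {k n : ℕ}
    (tbar : EuclideanSpace ℝ (Fin k)) (t : Fin n → EuclideanSpace ℝ (Fin k))
    (N : EuclideanSpace ℝ (Fin k) → ℝ)
    (hN_add : ∀ x y, N (x + y) ≤ N x + N y)
    (hN_smul : ∀ (c : ℝ) (x), N (c • x) = |c| * N x)
    (hN_zero : ∀ x, N x = 0 ↔ x = 0)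
    (lam : ℝ)
    (hlam : IsLeast ((fun s => dualNorm N (tbar - s)) '' convexHull ℝ (Set.range t)) lam) :
    ∀ lam' : ℝ, lam < lam' →
      ∃ Δ₀ : EuclideanSpace ℝ (Fin k), ∀ Δ : EuclideanSpace ℝ (Fin k),
        kliepLoss tbar t Δ₀ + lam' * N Δ₀ ≤ kliepLoss tbar t Δ + lam' * N Δ := by
  intro lam' hlam'
  obtain ⟨s, hs, rfl⟩ := hlam.1
  let p : Seminorm ℝ (EuclideanSpace ℝ (Fin k)) := Seminorm.of N hN_add (by simpa using hN_smul)
  have hp : ∀ x, p x = 0 → x = 0 := fun x => (hN_zero x).1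
  have : Nonempty (Fin n) := Set.range_nonempty_iff_nonempty.1 (convexHull_nonempty_iff.1 ⟨s, hs⟩)
  have hcoercive : Tendsto (fun Δ => kliepLoss tbar t Δ + lam' * N Δ) (cocompact _) atTop :=
    tendsto_atTop_mono (sub_log_le_kliepLoss_add_mul p hp hs lam') <|
      tendsto_atTop_add_const_right _ _ <|
        (p.tendsto_cocompact_atTop hp).const_mul_atTop (sub_pos.2 hlam')
  exact ((continuous_kliepLoss_s11 tbar t).add
    (continuous_const.mul p.continuous_of_finiteDimensional)).exists_forall_le hcoercive

/-- Theorem 2(iii)(a): if `t̄ ∉ C` and `λ > λ#` (the dual-norm distance from `t̄` to `C`),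
then the norm-penalized KLIEP loss `ℓ(Δ) + λ·N(Δ)` attains a global minimum. -/
theorem penalized_kliep_attains_min_of_gt_dual_dist {k n : ℕ} (hk : 1 ≤ k) (hn : 1 ≤ n)
    (tbar : EuclideanSpace ℝ (Fin k)) (t : Fin n → EuclideanSpace ℝ (Fin k))
    (N : EuclideanSpace ℝ (Fin k) → ℝ)
    (hN_add : ∀ x y, N (x + y) ≤ N x + N y)
    (hN_smul : ∀ (c : ℝ) (x), N (c • x) = |c| * N x)
    (hN_zero : ∀ x, N x = 0 ↔ x = 0)
    (hout : tbar ∉ convexHull ℝ (Set.range t))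
    (lam : ℝ)
    (hlam : IsLeast ((fun s => dualNorm N (tbar - s)) '' convexHull ℝ (Set.range t)) lam) :
    ∀ lam' : ℝ, lam < lam' →
      ∃ Δ₀ : EuclideanSpace ℝ (Fin k), ∀ Δ : EuclideanSpace ℝ (Fin k),
        kliepLoss tbar t Δ₀ + lam' * N Δ₀ ≤ kliepLoss tbar t Δ + lam' * N Δ :=
  penalized_kliep_attains_min_of_gt_dual_dist_general tbar t N hN_add hN_smul hN_zero lam hlam
end
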